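/- Let λ be a unit of R with λᵢ = φᵢ(λ). A code C = φ⁻¹(C₁ × C₂ × C₃ × C₄) of length n over R is λ-constacyclic if and only if for each i ∈ {1,2,3,4}, Cᵢ is a λᵢ-constacyclic code of length n over F_q. -/
import Mathlib


set_option synthInstance.maxHeartbeats 1000000
set_option maxHeartbeats 1000000

noncomputable section

open MvPolynomial

/-- Generators u^2-u, v^2-v of the defining ideal. -/
def genSet (F : Type) [Field F] : Set (MvPolynomial (Fin 2) F) :=
  {X 0 ^ 2 - X 0, X 1 ^ 2 - X 1}

/-- The ring R = F_q[u,v]/(u^2-u, v^2-v). -/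
abbrev Rq (F : Type) [Field F] := MvPolynomial (Fin 2) F ⧸ Ideal.span (genSet F)

/-- The image of u in R. -/
def uu (F : Type) [Field F] : Rq F := Ideal.Quotient.mk _ (X 0)

/-- The image of v in R. -/
def vv (F : Type) [Field F] : Rq F := Ideal.Quotient.mk _ (X 1)

/-- Evaluation of R at a point (x,y) with x^2 = x, y^2 = y. -/
def phi4 (F : Type) [Field F] (p : Fin 2 → F) (hp : ∀ i, p i ^ 2 = p i) : Rq F →+* F :=
  Ideal.Quotient.lift _ (aeval p).toRingHom (by
    intro a ha
    have h : Ideal.span (genSet F) ≤ RingHom.ker (aeval p).toRingHom := by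
      rw [Ideal.span_le]
      rintro g (rfl | rfl) <;> simp [RingHom.mem_ker, hp 0, hp 1]
    exact h ha)

/-- The projections φ₁, φ₂, φ₃, φ₄ : R → F_q sending a+bu+cv+duv to
a, a+b+c+d, a+b, a+c respectively (i.e. evaluation at (0,0),(1,1),(1,0),(0,1)). -/
def phiI (F : Type) [Field F] : Fin 4 → (Rq F →+* F) :=
  ![phi4 F ![0,0] (by intro i; fin_cases i <;> norm_num),
    phi4 F ![1,1] (by intro i; fin_cases i <;> norm_num),
    phi4 F ![1,0] (by intro i; fin_cases i <;> norm_num),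
    phi4 F ![0,1] (by intro i; fin_cases i <;> norm_num)]

/-- The μ-constacyclic shift (c₀,...,c_{n-1}) ↦ (μ c_{n-1}, c₀, ..., c_{n-2}). -/
def cshift {S : Type} [CommRing S] {n : ℕ} (μ : S) (c : Fin n → S) : Fin n → S :=
  fun i => if i.val = 0 then μ * c ((finRotate n).symm i) else c ((finRotate n).symm i)


/-- Idempotents of R mapping to the four standard basis vectors under φ. -/
def ee (F : Type) [Field F] : Fin 4 → Rq F :=
  ![Ideal.Quotient.mk _ ((1 - X 0) * (1 - X 1)),
    Ideal.Quotient.mk _ (X 0 * X 1),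
    Ideal.Quotient.mk _ (X 0 * (1 - X 1)),
    Ideal.Quotient.mk _ ((1 - X 0) * X 1)]

lemma phi4_mk (F : Type) [Field F] (p : Fin 2 → F) (hp : ∀ i, p i ^ 2 = p i)
    (q : MvPolynomial (Fin 2) F) :
    phi4 F p hp (Ideal.Quotient.mk _ q) = aeval p q := rfl

lemma phiI_ee (F : Type) [Field F] (i j : Fin 4) :
    phiI F j (ee F i) = if j = i then 1 else 0 := by
  fin_cases i <;> fin_cases j <;>
    simp [phiI, ee, phi4_mk]

lemma phiI_algebraMap (F : Type) [Field F] (j : Fin 4) (a : F) :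
    phiI F j (algebraMap F (Rq F) a) = a := by
  have : (algebraMap F (Rq F) a) = Ideal.Quotient.mk _ (MvPolynomial.C a) := rfl
  fin_cases j <;> simp [phiI, this, phi4_mk]

lemma cshift_comp {S T : Type} [CommRing S] [CommRing T] (f : S →+* T) {n : ℕ}
    (μ : S) (c : Fin n → S) :
    f ∘ cshift μ c = cshift (f μ) (f ∘ c) := by
  funext k
  simp only [cshift, Function.comp]
  split <;> simp

theorem stmt9 (F : Type) [Field F] [Fintype F] (n : ℕ) (hn : 0 < n)
    (lam : Rq F) (hlam : IsUnit lam)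
    (C : Submodule (Rq F) (Fin n → Rq F)) (Ci : Fin 4 → Submodule F (Fin n → F))
    (hC : ∀ s : Fin n → Rq F, s ∈ C ↔ ∀ i : Fin 4, (phiI F i) ∘ s ∈ Ci i) :
    (∀ c ∈ C, cshift lam c ∈ C) ↔
      ∀ i : Fin 4, ∀ c ∈ Ci i, cshift (phiI F i lam) c ∈ Ci i  := by
  constructor
  · intro h i c hc
    set s : Fin n → Rq F := fun k => ee F i * algebraMap F (Rq F) (c k) with hs
    have hsmem : s ∈ C := by
      rw [hC]
      intro j
      have : (phiI F j) ∘ s = fun k => (if j = i then 1 else 0) * c k := by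
        funext k
        simp [hs, phiI_ee, phiI_algebraMap]
      rw [this]
      by_cases hji : j = i
      · subst hji; simpa using hc
      · simp only [if_neg hji]
        have : (fun k => (0:F) * c k) = (0 : Fin n → F) := by funext k; simp
        rw [this]; exact (Ci j).zero_mem
    have h2 := h s hsmem
    rw [hC] at h2
    have h3 := h2 i
    rw [cshift_comp] at h3
    have : (phiI F i) ∘ s = c := by
      funext k
      simp [hs, phiI_ee, phiI_algebraMap]
    rwa [this] at h3
  · intro h c hcC
    rw [hC] at hcC ⊢
    intro i
    rw [cshift_comp]
    exact h i _ (hcC i)
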